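/- arXiv:2412.06371 — 4 statements merged into one kernel-verified Lean document; each statement's English description precedes it below -/
import Mathlib

section
/- For every inductive definition Φ, the class I(Φ) (defined via iteration sets) is closed under Φ, and I(Φ) is contained in every class that is closed under Φ; that is, I(Φ) is the smallest Φ-closed class. -/
/-- A class `I` (of ZF-sets) is closed under the inductive definition `Φ`
(a binary class relation on sets): whenever `Φ X x` holds and `X ⊆ I`,
then `x ∈ I`. -/
def ClosedUnder (Φ : ZFSet → ZFSet → Prop) (I : ZFSet → Prop) : Prop :=
  ∀ X x : ZFSet, Φ X x → (∀ y ∈ X, I y) → I x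

/-- `Z` is an iteration set for the inductive definition `Φ`: `Z` is a set of
ordered pairs, and for every `⟨u, x⟩ ∈ Z` there exists a set `X` with `Φ X x`
and `X ⊆ ⋃_{v ∈ u} { z : ⟨v, z⟩ ∈ Z }`. -/
def IsIterationSet (Φ : ZFSet → ZFSet → Prop) (Z : ZFSet) : Prop :=
  (∀ w ∈ Z, ∃ u x : ZFSet, w = ZFSet.pair u x) ∧
  ∀ u x : ZFSet, ZFSet.pair u x ∈ Z →
    ∃ X : ZFSet, Φ X x ∧ ∀ y ∈ X, ∃ v : ZFSet, v ∈ u ∧ ZFSet.pair v y ∈ Z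

/-- The class `I(Φ)`: the class of all `x` such that `⟨u, x⟩ ∈ Z` for some set `u`
and some iteration set `Z` for `Φ`. -/
def IClass (Φ : ZFSet → ZFSet → Prop) (x : ZFSet) : Prop :=
  ∃ u Z : ZFSet, IsIterationSet Φ Z ∧ ZFSet.pair u x ∈ Z

/-!
The iteration sets for `Φ` are closed under unions and under adjoining a pair `⟨u, x⟩` whose
premises are already reached at stages in `u`; with the collection principle this makes `I(Φ)`
closed under `Φ`. Conversely `⟨u, x⟩ ∈ Z` forces `x` into every `Φ`-closed class, by
`∈`-induction on the stage `u`.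
-/

open ZFSet

universe u

namespace ZFSet

theorem exists_collection {X : ZFSet.{u}} {P : ZFSet.{u} → ZFSet.{u} → Prop}
    (hP : ∀ y ∈ X, ∃ z, P y z) :
    ∃ Y : ZFSet, (∀ y ∈ X, ∃ z ∈ Y, P y z) ∧ ∀ z ∈ Y, ∃ y ∈ X, P y z := by
  let f : ZFSet → ZFSet := fun y => Classical.epsilon (P y)
  have : Definable₁ f := Classical.allZFSetDefinable _
  refine ⟨image f X, fun y hy => ⟨f y, mem_image.2 ⟨y, hy, rfl⟩, ?_⟩, fun z hz => ?_⟩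
  · exact Classical.epsilon_spec (hP y hy)
  · obtain ⟨y, hy, rfl⟩ := mem_image.1 hz
    exact ⟨y, hy, Classical.epsilon_spec (hP y hy)⟩

end ZFSet

section

variable {Φ : ZFSet → ZFSet → Prop}

theorem isIterationSet_sUnion {S : ZFSet} (hS : ∀ Z ∈ S, IsIterationSet Φ Z) :
    IsIterationSet Φ (⋃₀ S) := by
  refine ⟨fun w hw => ?_, fun u x hux => ?_⟩
  · obtain ⟨Z, hZ, hwZ⟩ := mem_sUnion.1 hw
    exact (hS Z hZ).1 w hwZ
  · obtain ⟨Z, hZ, huxZ⟩ := mem_sUnion.1 hux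
    obtain ⟨X, hΦ, hX⟩ := (hS Z hZ).2 u x huxZ
    refine ⟨X, hΦ, fun y hy => ?_⟩
    obtain ⟨v, hv, hvy⟩ := hX y hy
    exact ⟨v, hv, mem_sUnion_of_mem hvy hZ⟩

theorem IsIterationSet.insert_pair {Z X u x : ZFSet} (hZ : IsIterationSet Φ Z) (hΦ : Φ X x)
    (hX : ∀ y ∈ X, ∃ v ∈ u, pair v y ∈ Z) : IsIterationSet Φ (insert (pair u x) Z) := by
  have hsub : ∀ w ∈ Z, w ∈ insert (pair u x) Z := fun w hw => mem_insert_iff.2 (Or.inr hw)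
  refine ⟨fun w hw => ?_, fun u' x' hux' => ?_⟩
  · rcases mem_insert_iff.1 hw with rfl | hw
    exacts [⟨u, x, rfl⟩, hZ.1 w hw]
  · rcases mem_insert_iff.1 hux' with heq | hux'
    · obtain ⟨rfl, rfl⟩ := pair_inj.1 heq
      refine ⟨X, hΦ, fun y hy => ?_⟩
      obtain ⟨v, hv, hvy⟩ := hX y hy
      exact ⟨v, hv, hsub _ hvy⟩
    · obtain ⟨X', hΦ', hX'⟩ := hZ.2 u' x' hux'
      refine ⟨X', hΦ', fun y hy => ?_⟩
      obtain ⟨v, hv, hvy⟩ := hX' y hy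
      exact ⟨v, hv, hsub _ hvy⟩

theorem exists_isIterationSet_of_forall_mem {X : ZFSet} (hX : ∀ y ∈ X, IClass Φ y) :
    ∃ u Z : ZFSet, IsIterationSet Φ Z ∧ ∀ y ∈ X, ∃ v ∈ u, pair v y ∈ Z := by
  obtain ⟨S, hXS, hS⟩ :=
    exists_collection (P := fun y Z => IsIterationSet Φ Z ∧ ∃ u, pair u y ∈ Z) fun y hy => by
      obtain ⟨u, Z, hZ, huy⟩ := hX y hy
      exact ⟨Z, hZ, u, huy⟩
  have hreach : ∀ y ∈ X, ∃ v, pair v y ∈ ⋃₀ S := fun y hy => by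
    obtain ⟨Z, hZS, -, u, huy⟩ := hXS y hy
    exact ⟨u, mem_sUnion_of_mem huy hZS⟩
  obtain ⟨u, hXu, -⟩ := exists_collection hreach
  exact ⟨u, ⋃₀ S, isIterationSet_sUnion fun Z hZ => (hS Z hZ).choose_spec.2.1, hXu⟩

theorem closedUnder_IClass : ClosedUnder Φ (IClass Φ) := by
  intro X x hΦ hX
  obtain ⟨u, Z, hZ, hXu⟩ := exists_isIterationSet_of_forall_mem hX
  exact ⟨u, _, hZ.insert_pair hΦ hXu, mem_insert_iff.2 (Or.inl rfl)⟩

theorem IsIterationSet.mem_of_pair_mem {Z : ZFSet} (hZ : IsIterationSet Φ Z) {J : ZFSet → Prop}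
    (hJ : ClosedUnder Φ J) (u : ZFSet) : ∀ x, pair u x ∈ Z → J x := by
  induction u using inductionOn with
  | h u ih =>
    intro x hux
    obtain ⟨X, hΦ, hX⟩ := hZ.2 u x hux
    refine hJ X x hΦ fun y hy => ?_
    obtain ⟨v, hv, hvy⟩ := hX y hy
    exact ih v hv y hvy

theorem IClass_le_of_closedUnder {J : ZFSet → Prop} (hJ : ClosedUnder Φ J) {x : ZFSet}
    (hx : IClass Φ x) : J x :=
  let ⟨u, _, hZ, hux⟩ := hx
  hZ.mem_of_pair_mem hJ u x hux

end

/-- For every inductive definition `Φ`, the class `I(Φ)` (defined via iteration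
sets) is closed under `Φ`, and is contained in every class closed under `Φ`;
i.e., `I(Φ)` is the smallest `Φ`-closed class. -/
theorem IClass_smallest_closed (Φ : ZFSet → ZFSet → Prop) :
    ClosedUnder Φ (IClass Φ) ∧
    ∀ J : ZFSet → Prop, ClosedUnder Φ J → ∀ x : ZFSet, IClass Φ x → J x :=
  ⟨closedUnder_IClass, fun _ hJ _ => IClass_le_of_closedUnder hJ⟩
end

section
/- For every set X and every set-function F with domain X, the class W(X, F) is a set: there exists a set W such that for every set y, y ∈ W if and only if y belongs to W(X, F). -/
/-- `f` is a set-function with domain `X`: a set of ordered pairs that is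
functional and whose domain is exactly `X`. -/
def IsZFFun (f X : ZFSet) : Prop :=
  (∀ w ∈ f, ∃ u v : ZFSet, w = ZFSet.pair u v) ∧
  (∀ u v w : ZFSet, ZFSet.pair u v ∈ f → ZFSet.pair u w ∈ f → v = w) ∧
  (∀ u : ZFSet, (∃ v : ZFSet, ZFSet.pair u v ∈ f) ↔ u ∈ X)

/-- A class `W` is closed under the `W(X, F)`-clause: whenever `x ∈ X` and `f` is a
set-function with domain `F(x)` all of whose values lie in `W`, then `⟨x, f⟩ ∈ W`.
(Here `F(x) = v` is expressed by `⟨x, v⟩ ∈ F`.) -/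
def WClosed (X F : ZFSet) (W : ZFSet → Prop) : Prop :=
  ∀ x v f : ZFSet, x ∈ X → ZFSet.pair x v ∈ F → IsZFFun f v →
    (∀ u w : ZFSet, ZFSet.pair u w ∈ f → W w) → W (ZFSet.pair x f)

/-- The class `W(X, F)`: the smallest class closed under the `W(X, F)`-clause. -/
def WClass (X F : ZFSet) (y : ZFSet) : Prop :=
  ∀ W : ZFSet → Prop, WClosed X F W → W y

/-! Members of `W(X, F)` are codes of well-founded trees: a node carries a pair `⟨x, v⟩ ∈ F`
with `x ∈ X`, has one child for each element of `v`, and is coded as `⟨x, f⟩` where `f` is the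
graph of the children's codes. These trees form a W-type whose labels and arities are small, so
the W-type is small and its codes form a set. Every code lies in every closed class, by induction
on trees; conversely the codes form a closed class, since a set-function whose values are codes
lifts back to a family of trees by choice. -/

universe u v w

namespace WType

variable {α : Type v} {β : α → Type w} [Small.{u} α] [∀ a, Small.{u} (β a)]

variable (β) in
noncomputable def ofShrink :
    WType (fun a : Shrink.{u} α => Shrink.{u} (β ((equivShrink α).symm a))) → WType β
  | ⟨a, f⟩ => ⟨(equivShrink α).symm a, fun b => ofShrink (f (equivShrink _ b))⟩

theorem ofShrink_surjective : Function.Surjective (ofShrink.{u} β) := by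
  intro t
  induction t with
  | mk a f ih =>
    obtain ⟨a, rfl⟩ := (equivShrink α).symm.surjective a
    choose g hg using ih
    exact ⟨⟨a, fun b => g ((equivShrink _).symm b)⟩, by simp [ofShrink, hg]⟩

instance small : Small.{u} (WType β) :=
  small_of_surjective ofShrink_surjective

end WType

namespace ZFSet

noncomputable def graph (v : ZFSet.{u}) (g : v → ZFSet.{u}) : ZFSet.{u} :=
  range fun b : v => pair b (g b)

variable {v : ZFSet.{u}} {g : v → ZFSet.{u}}

theorem pair_mem_graph (b : v) : pair b (g b) ∈ graph v g :=
  mem_range_self b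

theorem pair_mem_graph_iff {a w : ZFSet.{u}} :
    pair a w ∈ graph v g ↔ ∃ b : v, ↑b = a ∧ g b = w := by
  simp only [graph, mem_range, pair_inj]

theorem isZFFun_graph : IsZFFun (graph v g) v := by
  refine ⟨?_, ?_, fun a => ?_⟩
  · simp only [graph, mem_range]
    rintro _ ⟨b, rfl⟩
    exact ⟨_, _, rfl⟩
  · simp only [pair_mem_graph_iff]
    rintro a _ _ ⟨b, rfl, rfl⟩ ⟨b', hb, rfl⟩
    rw [Subtype.ext hb]
  · simp only [pair_mem_graph_iff]
    exact ⟨fun ⟨_, b, hb, _⟩ => hb ▸ b.2, fun ha => ⟨_, ⟨a, ha⟩, rfl, rfl⟩⟩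

theorem graph_eq_of_isZFFun {f : ZFSet.{u}} (hf : IsZFFun f v)
    (hg : ∀ b : v, pair b (g b) ∈ f) : graph v g = f := by
  ext z
  refine ⟨fun hz => ?_, fun hz => ?_⟩
  · obtain ⟨b, rfl⟩ := mem_range.1 hz
    exact hg b
  · obtain ⟨a, w, rfl⟩ := hf.1 z hz
    have ha : a ∈ v := (hf.2.2 a).1 ⟨w, hz⟩
    rw [hf.2.1 a w _ hz (hg ⟨a, ha⟩)]
    exact pair_mem_graph ⟨a, ha⟩

end ZFSet

namespace WClass

variable (X F : ZFSet.{u})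

def Label : Type (u + 1) :=
  {p : ZFSet.{u} × ZFSet.{u} // p.1 ∈ X ∧ ZFSet.pair p.1 p.2 ∈ F}

instance : Small.{u} (Label X F) :=
  small_of_injective (f := fun p : Label X F => (⟨_, p.2.2⟩ : F)) fun _ _ h =>
    Subtype.ext <| Prod.ext_iff.2 <| ZFSet.pair_inj.1 (congrArg Subtype.val h)

abbrev Tree : Type (u + 1) :=
  WType fun p : Label X F => p.1.2

variable {X F}

noncomputable def Tree.toZF : Tree X F → ZFSet.{u}
  | ⟨p, f⟩ => ZFSet.pair p.1.1 (ZFSet.graph p.1.2 fun b => Tree.toZF (f b))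

theorem Tree.wClass_toZF (t : Tree X F) : WClass X F t.toZF := by
  induction t with
  | mk p f ih =>
    intro W hW
    refine hW _ _ _ p.2.1 p.2.2 ZFSet.isZFFun_graph fun u w huw => ?_
    obtain ⟨b, -, rfl⟩ := ZFSet.pair_mem_graph_iff.1 huw
    exact ih b W hW

theorem wClosed_range_toZF : WClosed X F (· ∈ ZFSet.range (Tree.toZF (X := X) (F := F))) := by
  intro x v f hx hxv hf hvals
  have lift : ∀ b : v, ∃ t : Tree X F, ZFSet.pair b t.toZF ∈ f := by
    intro b
    obtain ⟨w, hw⟩ := (hf.2.2 b).2 b.2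
    obtain ⟨t, rfl⟩ := ZFSet.mem_range.1 (hvals _ _ hw)
    exact ⟨t, hw⟩
  choose g hg using lift
  refine ZFSet.mem_range.2 ⟨⟨⟨(x, v), hx, hxv⟩, g⟩, ?_⟩
  simp only [Tree.toZF, ZFSet.graph_eq_of_isZFFun hf hg]

end WClass

theorem WClass_isSet_general (X F : ZFSet) :
    ∃ S : ZFSet, ∀ y : ZFSet, y ∈ S ↔ WClass X F y := by
  refine ⟨ZFSet.range (WClass.Tree.toZF (X := X) (F := F)),
    fun y => ⟨fun hy => ?_, fun hy => ?_⟩⟩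
  · obtain ⟨t, rfl⟩ := ZFSet.mem_range.1 hy
    exact t.wClass_toZF
  · exact hy _ WClass.wClosed_range_toZF

/-- For every set `X` and every set-function `F` with domain `X`, the class
`W(X, F)` is a set: there is a set `S` whose elements are exactly the members of
`W(X, F)`. -/
theorem WClass_isSet (X F : ZFSet) (hF : IsZFFun F X) :
    ∃ S : ZFSet, ∀ y : ZFSet, y ∈ S ↔ WClass X F y :=
  WClass_isSet_general X F
end

section
/- Let F be a set-function with domain X. Then for every set Y: Y = W(X, F) if and only if for every set y, y ∈ Y ⇔ there exist x ∈ X and a set f such that y = ⟨x, f⟩, f is a set-function with domain F(x), and f(u) ∈ Y for every u in the domain of f. -/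
lemma rank_chain (u w x f : ZFSet) (h : ZFSet.pair u w ∈ f) :
    ZFSet.rank w < ZFSet.rank (ZFSet.pair x f) := by
  have h1 : w ∈ ({u, w} : ZFSet) := by simp
  have h2 : ({u, w} : ZFSet) ∈ ZFSet.pair u w := by
    show ({u, w} : ZFSet) ∈ ({{u}, {u, w}} : ZFSet); simp
  have h3 : f ∈ ({x, f} : ZFSet) := by simp
  have h4 : ({x, f} : ZFSet) ∈ ZFSet.pair x f := by
    show ({x, f} : ZFSet) ∈ ({{x}, {x, f}} : ZFSet); simp
  calc ZFSet.rank w < ZFSet.rank ({u,w} : ZFSet) := ZFSet.rank_lt_of_mem h1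
    _ < ZFSet.rank (ZFSet.pair u w) := ZFSet.rank_lt_of_mem h2
    _ < ZFSet.rank f := ZFSet.rank_lt_of_mem h
    _ < ZFSet.rank ({x, f} : ZFSet) := ZFSet.rank_lt_of_mem h3
    _ < ZFSet.rank (ZFSet.pair x f) := ZFSet.rank_lt_of_mem h4

/-- Inversion: every member of `W(X, F)` has the required pair form, with
recursive values again in `W(X, F)`. -/
lemma wclass_inversion (X F y : ZFSet) (h : WClass X F y) :
    ∃ x : ZFSet, x ∈ X ∧ ∃ f : ZFSet, y = ZFSet.pair x f ∧
      (∃ v : ZFSet, ZFSet.pair x v ∈ F ∧ IsZFFun f v) ∧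
      (∀ u w : ZFSet, ZFSet.pair u w ∈ f → WClass X F w) := by
  have := h (fun z => WClass X F z ∧
      ∃ x : ZFSet, x ∈ X ∧ ∃ f : ZFSet, z = ZFSet.pair x f ∧
        (∃ v : ZFSet, ZFSet.pair x v ∈ F ∧ IsZFFun f v) ∧
        (∀ u w : ZFSet, ZFSet.pair u w ∈ f → WClass X F w))
    (by
      intro x v f hx hv hf hvals
      refine ⟨fun W hW => hW x v f hx hv hf (fun u w huw => (hvals u w huw).1 W hW),
        x, hx, f, rfl, ⟨v, hv, hf⟩, fun u w huw => (hvals u w huw).1⟩)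
  exact this.2

/-- Let `F` be a set-function with domain `X`. Then for every set `Y`:
`Y = W(X, F)` if and only if for every set `y`, `y ∈ Y` iff there exist `x ∈ X` and
a set `f` such that `y = ⟨x, f⟩`, `f` is a set-function with domain `F(x)`, and
`f(u) ∈ Y` for every `u` in the domain of `f`. -/
theorem WClass_fixpoint_characterization (X F : ZFSet) (hF : IsZFFun F X)
    (Y : ZFSet) :
    (∀ y : ZFSet, y ∈ Y ↔ WClass X F y) ↔
    (∀ y : ZFSet, y ∈ Y ↔
      ∃ x : ZFSet, x ∈ X ∧ ∃ f : ZFSet, y = ZFSet.pair x f ∧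
        (∃ v : ZFSet, ZFSet.pair x v ∈ F ∧ IsZFFun f v) ∧
        (∀ u w : ZFSet, ZFSet.pair u w ∈ f → w ∈ Y)) := by
  constructor
  · intro h y
    rw [h y]
    constructor
    · intro hw
      obtain ⟨x, hx, f, rfl, hv, hvals⟩ := wclass_inversion X F y hw
      exact ⟨x, hx, f, rfl, hv, fun u w huw => (h w).mpr (hvals u w huw)⟩
    · rintro ⟨x, hx, f, rfl, ⟨v, hvF, hf⟩, hvals⟩
      intro W hW
      exact hW x v f hx hvF hf
        (fun u w huw => (h w).mp (hvals u w huw) W hW)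
  · intro h y
    constructor
    · intro hy
      have main : ∀ o : Ordinal, ∀ z : ZFSet, ZFSet.rank z = o → z ∈ Y → WClass X F z := by
        intro o
        induction o using Ordinal.induction with
        | h o ih =>
          intro z hrank hz
          obtain ⟨x, hx, f, rfl, ⟨v, hvF, hf⟩, hvals⟩ := (h z).mp hz
          intro W hW
          refine hW x v f hx hvF hf (fun u w huw => ?_)
          exact ih (ZFSet.rank w) (hrank ▸ rank_chain u w x f huw) w rfl
            (hvals u w huw) W hW
      exact main (ZFSet.rank y) y rfl hy
    · intro hw
      exact hw (· ∈ Y)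
        (fun x v f hx hvF hf hvals => (h _).mpr ⟨x, hx, f, rfl, ⟨v, hvF, hf⟩, hvals⟩)
end

section
/- In the ΠΣI type structure on a pca A over ω, suppose σ ∼ τ and τ ∼ ρ. Then: (i) σ ∼ σ, τ ∼ σ, and σ ∼ ρ; (ii) a ∼_σ b if and only if a ∼_τ b; (iii) if a ∼_σ b and b ∼_σ c, then a ∼_σ a, b ∼_σ a, and a ∼_σ c. In other words, ∼ and each ∼_σ are partial equivalence relations on A. -/
universe u

/-- A partial combinatory algebra (pca): a set with at least two elements together
with a partial binary operation admitting combinators `k` and `s` such that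
`k·a·b ≃ a`, `s·a·b` is defined, and `s·a·b·c ≃ a·c·(b·c)`. -/
structure PCA (A : Type u) where
  ap : A → A → Part A
  nontriv : ∃ a b : A, a ≠ b
  k : A
  s : A
  k_spec : ∀ a b : A, (ap k a).bind (fun x => ap x b) = Part.some a
  s_def : ∀ a b : A, ((ap s a).bind (fun x => ap x b)).Dom
  s_spec : ∀ a b c : A,
    ((ap s a).bind (fun x => ap x b)).bind (fun x => ap x c) =
      (ap a c).bind (fun x => (ap b c).bind (fun y => ap x y))

namespace PCA

variable {A : Type u} (P : PCA A)

/-- The partial value `a·b·c` (application associates to the left). -/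
def ap2 (a b c : A) : Part A := (P.ap a b).bind fun x => P.ap x c

/-- The partial value `a·b·c·d`. -/
def ap3 (a b c d : A) : Part A := (P.ap2 a b c).bind fun x => P.ap x d

/-- The partial value `a·b·c·d·e`. -/
def ap4 (a b c d e : A) : Part A := (P.ap3 a b c d).bind fun x => P.ap x e

end PCA

/-- A pca over ω with an injective numeral map and a fixed pairing combinator
`pc` with projections `p0`, `p1`; `mkpair a b` denotes the (total) value of
`pc·a·b`. -/
structure TPCA (A : Type u) extends PCA A where
  num : ℕ → A
  num_inj : Function.Injective num
  succC : A
  predC : A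
  dC : A
  succ_spec : ∀ n : ℕ, toPCA.ap succC (num n) = Part.some (num (n + 1))
  pred_spec : ∀ n : ℕ, toPCA.ap predC (num (n + 1)) = Part.some (num n)
  d_eq : ∀ (n : ℕ) (a b : A), toPCA.ap4 dC (num n) (num n) a b = Part.some a
  d_ne : ∀ (n m : ℕ) (a b : A), n ≠ m →
    toPCA.ap4 dC (num n) (num m) a b = Part.some b
  pc : A
  p0 : A
  p1 : A
  mkpair : A → A → A
  mkpair_spec : ∀ a b : A, toPCA.ap2 pc a b = Part.some (mkpair a b)
  p0_spec : ∀ a b : A, toPCA.ap p0 (mkpair a b) = Part.some a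
  p1_spec : ∀ a b : A, toPCA.ap p1 (mkpair a b) = Part.some b

namespace TPCA

variable {A : Type u} (P : TPCA A)

/-- The code `N_n = p·0̄·n̄` of the finite type with `n` elements. -/
def NfinC (n : ℕ) : A := P.mkpair (P.num 0) (P.num n)

/-- The code `N = p·1̄·0̄` of the type of natural numbers. -/
def NC : A := P.mkpair (P.num 1) (P.num 0)

/-- The code `Π_σ i = p·2̄·(p·σ·i)` of a dependent product. -/
def PiC (σ i : A) : A := P.mkpair (P.num 2) (P.mkpair σ i)

/-- The code `Σ_σ i = p·3̄·(p·σ·i)` of a dependent sum. -/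
def SiC (σ i : A) : A := P.mkpair (P.num 3) (P.mkpair σ i)

/-- The code `I_σ(a,b) = p·4̄·(p·σ·(p·a·b))` of an identity type. -/
def IdC (σ a b : A) : A := P.mkpair (P.num 4) (P.mkpair σ (P.mkpair a b))

end TPCA

/-- The ΠΣI type structure on a pca over ω, presented as the inductively defined
class of triples `⟨σ, τ, B⟩` with `σ, τ ∈ A` and `B ⊆ A × A`; `σ ∼ τ` means
`⟨σ, τ, B⟩` is in the class for some `B`, and `a ∼_σ b` means `(a, b) ∈ B` for
some such triple. -/
inductive TS {A : Type u} (P : TPCA A) : A → A → (A → A → Prop) → Prop where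
  | nfin (n : ℕ) :
      TS P (P.NfinC n) (P.NfinC n)
        (fun a b => ∃ m : ℕ, m < n ∧ a = P.num m ∧ b = P.num m)
  | nat :
      TS P P.NC P.NC (fun a b => ∃ n : ℕ, a = P.num n ∧ b = P.num n)
  | pi (σ τ i j : A) (B : A → A → Prop) (iv jv : A → A → A)
      (F : A → A → A → A → Prop) :
      TS P σ τ B →
      (∀ a b : A, B a b → iv a b ∈ P.toPCA.ap i a) →
      (∀ a b : A, B a b → jv a b ∈ P.toPCA.ap j b) →
      (∀ a b : A, B a b → TS P (iv a b) (jv a b) (F a b)) →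
      TS P (P.PiC σ i) (P.PiC τ j)
        (fun f g => ∀ a b : A, B a b → ∃ fa gb : A,
          fa ∈ P.toPCA.ap f a ∧ gb ∈ P.toPCA.ap g b ∧ F a b fa gb)
  | sigma (σ τ i j : A) (B : A → A → Prop) (iv jv : A → A → A)
      (F : A → A → A → A → Prop) :
      TS P σ τ B →
      (∀ a b : A, B a b → iv a b ∈ P.toPCA.ap i a) →
      (∀ a b : A, B a b → jv a b ∈ P.toPCA.ap j b) →
      (∀ a b : A, B a b → TS P (iv a b) (jv a b) (F a b)) →
      TS P (P.SiC σ i) (P.SiC τ j)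
        (fun a b => ∃ a₀ b₀ : A, a₀ ∈ P.toPCA.ap P.p0 a ∧ b₀ ∈ P.toPCA.ap P.p0 b ∧
          B a₀ b₀ ∧ ∃ a₁ b₁ : A, a₁ ∈ P.toPCA.ap P.p1 a ∧ b₁ ∈ P.toPCA.ap P.p1 b ∧
          F a₀ b₀ a₁ b₁)
  | ident (σ τ a a' b b' : A) (B : A → A → Prop) :
      TS P σ τ B → B a a' → B b b' →
      TS P (P.IdC σ a b) (P.IdC τ a' b')
        (fun c d => c = P.num 0 ∧ d = P.num 0 ∧ B a b)

/-- `σ ∼ τ` in the ΠΣI type structure. -/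
def TEquiv {A : Type u} (P : TPCA A) (σ τ : A) : Prop :=
  ∃ B : A → A → Prop, TS P σ τ B

/-- `a ∼_σ b` in the ΠΣI type structure. -/
def MemT {A : Type u} (P : TPCA A) (σ a b : A) : Prop :=
  ∃ (τ : A) (B : A → A → Prop), TS P σ τ B ∧ B a b


section PERProof

variable {A : Type u} {P : TPCA A}

lemma mkpair_inj {a b a' b' : A} (h : P.mkpair a b = P.mkpair a' b') :
    a = a' ∧ b = b' := by
  constructor
  · have h1 := P.p0_spec a b
    rw [h, P.p0_spec] at h1
    exact (Part.some_inj.mp h1).symm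
  · have h1 := P.p1_spec a b
    rw [h, P.p1_spec] at h1
    exact (Part.some_inj.mp h1).symm

lemma tag_inj {k l : ℕ} {x y : A} (h : P.mkpair (P.num k) x = P.mkpair (P.num l) y) :
    k = l ∧ x = y :=
  ⟨P.num_inj (mkpair_inj h).1, (mkpair_inj h).2⟩

lemma TS_iff {σ τ : A} {B B' : A → A → Prop} (h : TS P σ τ B)
    (e : ∀ a b, B a b ↔ B' a b) : TS P σ τ B' := by
  have hBB : B = B' := funext fun a => funext fun b => propext (e a b)
  exact hBB ▸ h

/-- Inversion for `NfinC`. -/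
lemma TS_nfin_inv {n : ℕ} {ρ : A} {B' : A → A → Prop} (h : TS P (P.NfinC n) ρ B') :
    ρ = P.NfinC n ∧ B' = fun a b => ∃ m : ℕ, m < n ∧ a = P.num m ∧ b = P.num m := by
  generalize hX : P.NfinC n = X at h
  cases h with
  | nfin m =>
    simp only [TPCA.NfinC] at hX
    obtain ⟨h1, h2⟩ := tag_inj hX
    obtain rfl : n = m := P.num_inj h2
    exact ⟨rfl, rfl⟩
  | nat =>
    exact absurd (tag_inj (show P.mkpair (P.num 0) (P.num n) = P.mkpair (P.num 1) (P.num 0) from hX)).1 (by omega)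
  | pi σ₁ τ₁ i j B₀ iv jv F h₀ hi hj hF =>
    exact absurd (tag_inj (show P.mkpair (P.num 0) (P.num n) = P.mkpair (P.num 2) (P.mkpair σ₁ i) from hX)).1 (by omega)
  | sigma σ₁ τ₁ i j B₀ iv jv F h₀ hi hj hF =>
    exact absurd (tag_inj (show P.mkpair (P.num 0) (P.num n) = P.mkpair (P.num 3) (P.mkpair σ₁ i) from hX)).1 (by omega)
  | ident σ₁ τ₁ a a' b b' B₀ h₀ ha hb =>
    exact absurd (tag_inj (show P.mkpair (P.num 0) (P.num n) = P.mkpair (P.num 4) (P.mkpair σ₁ (P.mkpair a b)) from hX)).1 (by omega)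

/-- Inversion for `NC`. -/
lemma TS_nat_inv {ρ : A} {B' : A → A → Prop} (h : TS P P.NC ρ B') :
    ρ = P.NC ∧ B' = fun a b => ∃ n : ℕ, a = P.num n ∧ b = P.num n := by
  generalize hX : P.NC = X at h
  cases h with
  | nat => exact ⟨rfl, rfl⟩
  | nfin m =>
    exact absurd (tag_inj (show P.mkpair (P.num 1) (P.num 0) = P.mkpair (P.num 0) (P.num m) from hX)).1 (by omega)
  | pi σ₁ τ₁ i j B₀ iv jv F h₀ hi hj hF =>
    exact absurd (tag_inj (show P.mkpair (P.num 1) (P.num 0) = P.mkpair (P.num 2) (P.mkpair σ₁ i) from hX)).1 (by omega)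
  | sigma σ₁ τ₁ i j B₀ iv jv F h₀ hi hj hF =>
    exact absurd (tag_inj (show P.mkpair (P.num 1) (P.num 0) = P.mkpair (P.num 3) (P.mkpair σ₁ i) from hX)).1 (by omega)
  | ident σ₁ τ₁ a a' b b' B₀ h₀ ha hb =>
    exact absurd (tag_inj (show P.mkpair (P.num 1) (P.num 0) = P.mkpair (P.num 4) (P.mkpair σ₁ (P.mkpair a b)) from hX)).1 (by omega)

/-- Inversion for `PiC`. -/
lemma TS_pi_inv {σ i ρ : A} {B' : A → A → Prop} (h : TS P (P.PiC σ i) ρ B') :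
    ∃ (τ j : A) (B₂ : A → A → Prop) (iv₂ jv₂ : A → A → A) (F₂ : A → A → A → A → Prop),
      ρ = P.PiC τ j ∧ TS P σ τ B₂ ∧
      (∀ a b, B₂ a b → iv₂ a b ∈ P.toPCA.ap i a) ∧
      (∀ a b, B₂ a b → jv₂ a b ∈ P.toPCA.ap j b) ∧
      (∀ a b, B₂ a b → TS P (iv₂ a b) (jv₂ a b) (F₂ a b)) ∧
      B' = fun f g => ∀ a b : A, B₂ a b → ∃ fa gb : A,
        fa ∈ P.toPCA.ap f a ∧ gb ∈ P.toPCA.ap g b ∧ F₂ a b fa gb := by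
  generalize hX : P.PiC σ i = X at h
  cases h with
  | pi σ₁ τ₁ i₁ j₁ B₀ iv jv F h₀ hi hj hF =>
    obtain ⟨-, h2⟩ := tag_inj (show P.mkpair (P.num 2) (P.mkpair σ i) = P.mkpair (P.num 2) (P.mkpair σ₁ i₁) from hX)
    obtain ⟨rfl, rfl⟩ := mkpair_inj h2
    exact ⟨τ₁, j₁, B₀, iv, jv, F, rfl, h₀, hi, hj, hF, rfl⟩
  | nfin m =>
    exact absurd (tag_inj (show P.mkpair (P.num 2) (P.mkpair σ i) = P.mkpair (P.num 0) (P.num m) from hX)).1 (by omega)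
  | nat =>
    exact absurd (tag_inj (show P.mkpair (P.num 2) (P.mkpair σ i) = P.mkpair (P.num 1) (P.num 0) from hX)).1 (by omega)
  | sigma σ₁ τ₁ i₁ j₁ B₀ iv jv F h₀ hi hj hF =>
    exact absurd (tag_inj (show P.mkpair (P.num 2) (P.mkpair σ i) = P.mkpair (P.num 3) (P.mkpair σ₁ i₁) from hX)).1 (by omega)
  | ident σ₁ τ₁ a a' b b' B₀ h₀ ha hb =>
    exact absurd (tag_inj (show P.mkpair (P.num 2) (P.mkpair σ i) = P.mkpair (P.num 4) (P.mkpair σ₁ (P.mkpair a b)) from hX)).1 (by omega)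

/-- Inversion for `SiC`. -/
lemma TS_sigma_inv {σ i ρ : A} {B' : A → A → Prop} (h : TS P (P.SiC σ i) ρ B') :
    ∃ (τ j : A) (B₂ : A → A → Prop) (iv₂ jv₂ : A → A → A) (F₂ : A → A → A → A → Prop),
      ρ = P.SiC τ j ∧ TS P σ τ B₂ ∧
      (∀ a b, B₂ a b → iv₂ a b ∈ P.toPCA.ap i a) ∧
      (∀ a b, B₂ a b → jv₂ a b ∈ P.toPCA.ap j b) ∧
      (∀ a b, B₂ a b → TS P (iv₂ a b) (jv₂ a b) (F₂ a b)) ∧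
      B' = fun x y => ∃ a₀ b₀ : A, a₀ ∈ P.toPCA.ap P.p0 x ∧ b₀ ∈ P.toPCA.ap P.p0 y ∧
        B₂ a₀ b₀ ∧ ∃ a₁ b₁ : A, a₁ ∈ P.toPCA.ap P.p1 x ∧ b₁ ∈ P.toPCA.ap P.p1 y ∧
        F₂ a₀ b₀ a₁ b₁ := by
  generalize hX : P.SiC σ i = X at h
  cases h with
  | sigma σ₁ τ₁ i₁ j₁ B₀ iv jv F h₀ hi hj hF =>
    obtain ⟨-, h2⟩ := tag_inj (show P.mkpair (P.num 3) (P.mkpair σ i) = P.mkpair (P.num 3) (P.mkpair σ₁ i₁) from hX)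
    obtain ⟨rfl, rfl⟩ := mkpair_inj h2
    exact ⟨τ₁, j₁, B₀, iv, jv, F, rfl, h₀, hi, hj, hF, rfl⟩
  | nfin m =>
    exact absurd (tag_inj (show P.mkpair (P.num 3) (P.mkpair σ i) = P.mkpair (P.num 0) (P.num m) from hX)).1 (by omega)
  | nat =>
    exact absurd (tag_inj (show P.mkpair (P.num 3) (P.mkpair σ i) = P.mkpair (P.num 1) (P.num 0) from hX)).1 (by omega)
  | pi σ₁ τ₁ i₁ j₁ B₀ iv jv F h₀ hi hj hF =>
    exact absurd (tag_inj (show P.mkpair (P.num 3) (P.mkpair σ i) = P.mkpair (P.num 2) (P.mkpair σ₁ i₁) from hX)).1 (by omega)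
  | ident σ₁ τ₁ a a' b b' B₀ h₀ ha hb =>
    exact absurd (tag_inj (show P.mkpair (P.num 3) (P.mkpair σ i) = P.mkpair (P.num 4) (P.mkpair σ₁ (P.mkpair a b)) from hX)).1 (by omega)

/-- Inversion for `IdC`. -/
lemma TS_id_inv {σ a b ρ : A} {B' : A → A → Prop} (h : TS P (P.IdC σ a b) ρ B') :
    ∃ (τ a' b' : A) (B₂ : A → A → Prop), ρ = P.IdC τ a' b' ∧ TS P σ τ B₂ ∧
      B₂ a a' ∧ B₂ b b' ∧
      B' = fun c d => c = P.num 0 ∧ d = P.num 0 ∧ B₂ a b := by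
  generalize hX : P.IdC σ a b = X at h
  cases h with
  | ident σ₁ τ₁ c c' d d' B₀ h₀ hc hd =>
    obtain ⟨-, h2⟩ := tag_inj (show P.mkpair (P.num 4) (P.mkpair σ (P.mkpair a b)) = P.mkpair (P.num 4) (P.mkpair σ₁ (P.mkpair c d)) from hX)
    obtain ⟨rfl, h3⟩ := mkpair_inj h2
    obtain ⟨rfl, rfl⟩ := mkpair_inj h3
    exact ⟨τ₁, c', d', B₀, rfl, h₀, hc, hd, rfl⟩
  | nfin m =>
    exact absurd (tag_inj (show P.mkpair (P.num 4) (P.mkpair σ (P.mkpair a b)) = P.mkpair (P.num 0) (P.num m) from hX)).1 (by omega)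
  | nat =>
    exact absurd (tag_inj (show P.mkpair (P.num 4) (P.mkpair σ (P.mkpair a b)) = P.mkpair (P.num 1) (P.num 0) from hX)).1 (by omega)
  | pi σ₁ τ₁ i₁ j₁ B₀ iv jv F h₀ hi hj hF =>
    exact absurd (tag_inj (show P.mkpair (P.num 4) (P.mkpair σ (P.mkpair a b)) = P.mkpair (P.num 2) (P.mkpair σ₁ i₁) from hX)).1 (by omega)
  | sigma σ₁ τ₁ i₁ j₁ B₀ iv jv F h₀ hi hj hF =>
    exact absurd (tag_inj (show P.mkpair (P.num 4) (P.mkpair σ (P.mkpair a b)) = P.mkpair (P.num 3) (P.mkpair σ₁ i₁) from hX)).1 (by omega)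

/-- The package of PER facts proved by simultaneous induction on a `TS` derivation. -/
structure TSPack (P : TPCA A) (σ τ : A) (B : A → A → Prop) : Prop where
  bsym : ∀ a b, B a b → B b a
  btrans : ∀ a b c, B a b → B b c → B a c
  symm : TS P τ σ (fun a b => B b a)
  trans : ∀ ρ B', TS P τ ρ B' → TS P σ ρ B ∧ ∀ a b, B a b ↔ B' a b
  coh : ∀ ρ B', TS P σ ρ B' → ∀ a b, B a b ↔ B' a b

/-- Coherence among the family relations in the `pi`/`sigma` cases. -/
lemma coh_aux {i j : A} {B₀ : A → A → Prop} {iv jv : A → A → A} {F : A → A → A → A → Prop}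
    (bsym : ∀ a b, B₀ a b → B₀ b a) (btrans : ∀ a b c, B₀ a b → B₀ b c → B₀ a c)
    (hi : ∀ a b, B₀ a b → iv a b ∈ P.toPCA.ap i a)
    (hj : ∀ a b, B₀ a b → jv a b ∈ P.toPCA.ap j b)
    (hF : ∀ a b, B₀ a b → TS P (iv a b) (jv a b) (F a b))
    (ihF : ∀ a b, B₀ a b → TSPack P (iv a b) (jv a b) (F a b)) :
    ∀ a b, B₀ a b →
      (∀ x y, F a b x y ↔ F a a x y) ∧
      (∀ x y, F b a x y ↔ F a a y x) ∧
      (∀ x y, F a b x y ↔ F b b y x) := by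
  intro a b hab
  have hba := bsym a b hab
  have haa := btrans a b a hab hba
  have hbb := btrans b a b hba hab
  have e1 : iv a a = iv a b := Part.mem_unique (hi a a haa) (hi a b hab)
  have e2 : jv a a = jv b a := Part.mem_unique (hj a a haa) (hj b a hba)
  have e3 : jv b b = jv a b := Part.mem_unique (hj b b hbb) (hj a b hab)
  refine ⟨?_, ?_, ?_⟩
  · exact (ihF a b hab).coh (jv a a) (F a a) (by rw [← e1]; exact hF a a haa)
  · have hs : TS P (jv b a) (iv a a) (fun u v => F a a v u) := by
      rw [← e2]; exact (ihF a a haa).symm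
    exact ((ihF b a hba).trans (iv a a) (fun u v => F a a v u) hs).2
  · have hs : TS P (jv a b) (iv b b) (fun u v => F b b v u) := by
      rw [← e3]; exact (ihF b b hbb).symm
    exact ((ihF a b hab).trans (iv b b) (fun u v => F b b v u) hs).2

theorem TS_main {σ τ : A} {B : A → A → Prop} (h : TS P σ τ B) : TSPack P σ τ B := by
  induction h with
  | nfin n =>
    refine ⟨?_, ?_, ?_, ?_, ?_⟩
    · rintro a b ⟨m, hm, rfl, rfl⟩; exact ⟨m, hm, rfl, rfl⟩
    · rintro a b c ⟨m, hm, rfl, rfl⟩ ⟨m', hm', he, rfl⟩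
      obtain rfl : m = m' := P.num_inj he
      exact ⟨m, hm, rfl, rfl⟩
    · exact TS_iff (TS.nfin (P := P) n)
        (fun a b => ⟨fun ⟨m, hm, h1, h2⟩ => ⟨m, hm, h2, h1⟩, fun ⟨m, hm, h1, h2⟩ => ⟨m, hm, h2, h1⟩⟩)
    · intro ρ B' h'
      obtain ⟨rfl, rfl⟩ := TS_nfin_inv h'
      exact ⟨TS.nfin n, fun a b => Iff.rfl⟩
    · intro ρ B' h'
      obtain ⟨rfl, rfl⟩ := TS_nfin_inv h'
      exact fun a b => Iff.rfl
  | nat =>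
    refine ⟨?_, ?_, ?_, ?_, ?_⟩
    · rintro a b ⟨m, rfl, rfl⟩; exact ⟨m, rfl, rfl⟩
    · rintro a b c ⟨m, rfl, rfl⟩ ⟨m', he, rfl⟩
      obtain rfl : m = m' := P.num_inj he
      exact ⟨m, rfl, rfl⟩
    · exact TS_iff (TS.nat (P := P))
        (fun a b => ⟨fun ⟨m, h1, h2⟩ => ⟨m, h2, h1⟩, fun ⟨m, h1, h2⟩ => ⟨m, h2, h1⟩⟩)
    · intro ρ B' h'
      obtain ⟨rfl, rfl⟩ := TS_nat_inv h'
      exact ⟨TS.nat, fun a b => Iff.rfl⟩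
    · intro ρ B' h'
      obtain ⟨rfl, rfl⟩ := TS_nat_inv h'
      exact fun a b => Iff.rfl
  | pi σ₁ τ₁ i j B₀ iv jv F h₀ hi hj hF ih₀ ihF =>
    have coh := coh_aux ih₀.bsym ih₀.btrans hi hj hF ihF
    refine ⟨?_, ?_, ?_, ?_, ?_⟩
    · -- symmetry of the relation
      intro f g hfg a b hab
      obtain ⟨fb, ga, hfb, hga, hFba⟩ := hfg b a (ih₀.bsym a b hab)
      exact ⟨ga, fb, hga, hfb,
        ((coh a b hab).1 ga fb).mpr (((coh a b hab).2.1 fb ga).mp hFba)⟩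
    · -- transitivity of the relation
      intro f g k hfg hgk a b hab
      have haa := ih₀.btrans a b a hab (ih₀.bsym a b hab)
      obtain ⟨fa, ga, hfa, hga, hFaa⟩ := hfg a a haa
      obtain ⟨ga', kb, hga', hkb, hFab⟩ := hgk a b hab
      have he : ga' = ga := Part.mem_unique hga' hga
      rw [he] at hFab
      exact ⟨fa, kb, hfa, hkb,
        (ihF a b hab).btrans fa ga kb (((coh a b hab).1 fa ga).mpr hFaa) hFab⟩
    · -- symmetry of TS
      refine TS_iff (TS.pi τ₁ σ₁ j i (fun a b => B₀ b a) (fun a b => jv b a) (fun a b => iv b a)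
        (fun a b x y => F b a y x) ih₀.symm (fun a b hba => hj b a hba)
        (fun a b hba => hi b a hba) (fun a b hba => (ihF b a hba).symm)) ?_
      intro f g
      constructor
      · intro hc a b hab
        obtain ⟨fa, gb, h1, h2, h3⟩ := hc b a hab
        exact ⟨gb, fa, h2, h1, h3⟩
      · intro hc a b hba
        obtain ⟨x, y, hx, hy, hxy⟩ := hc b a hba
        exact ⟨y, x, hy, hx, hxy⟩
    · -- transitivity of TS, with coherence
      intro ρ B' h'
      obtain ⟨ρ', j', B₂, iv₂, jv₂, F₂, rfl, h₂, hi₂, hj₂, hF₂, rfl⟩ := TS_pi_inv h'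
      obtain ⟨hσρ, E0⟩ := ih₀.trans ρ' B₂ h₂
      have key : ∀ a b, B₀ a b →
          jv₂ a b ∈ P.toPCA.ap j' b ∧ TS P (iv a b) (jv₂ a b) (F a b) ∧
          (∀ x y, F a b x y ↔ F₂ a b x y) := by
        intro a b hab
        have hab₂ : B₂ a b := (E0 a b).mp hab
        have haa := ih₀.btrans a b a hab (ih₀.bsym a b hab)
        have e1 : iv a a = iv a b := Part.mem_unique (hi a a haa) (hi a b hab)
        have e2 : jv a a = iv₂ a b := Part.mem_unique (hj a a haa) (hi₂ a b hab₂)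
        obtain ⟨T1, E1⟩ := (ihF a a haa).trans (jv₂ a b) (F₂ a b)
          (by rw [e2]; exact hF₂ a b hab₂)
        have E2 := (coh a b hab).1
        refine ⟨hj₂ a b hab₂, ?_, fun x y => (E2 x y).trans (E1 x y)⟩
        rw [← e1]
        exact TS_iff T1 (fun x y => (E2 x y).symm)
      refine ⟨TS.pi σ₁ ρ' i j' B₀ iv (fun a b => jv₂ a b) F hσρ hi
        (fun a b hab => (key a b hab).1) (fun a b hab => (key a b hab).2.1), ?_⟩
      intro f g
      constructor
      · intro hB a b hab₂
        have hab : B₀ a b := (E0 a b).mpr hab₂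
        obtain ⟨fa, gb, h1, h2, h3⟩ := hB a b hab
        exact ⟨fa, gb, h1, h2, ((key a b hab).2.2 fa gb).mp h3⟩
      · intro hB a b hab
        obtain ⟨fa, gb, h1, h2, h3⟩ := hB a b ((E0 a b).mp hab)
        exact ⟨fa, gb, h1, h2, ((key a b hab).2.2 fa gb).mpr h3⟩
    · -- left coherence
      intro ρ B' h'
      obtain ⟨ρ', j₂, B₂, iv₂, jv₂, F₂, rfl, h₂, hi₂, hj₂, hF₂, rfl⟩ := TS_pi_inv h'
      have E0 := ih₀.coh ρ' B₂ h₂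
      have key : ∀ a b, B₀ a b → ∀ x y, F a b x y ↔ F₂ a b x y := by
        intro a b hab
        have hab₂ := (E0 a b).mp hab
        have e1 : iv a b = iv₂ a b := Part.mem_unique (hi a b hab) (hi₂ a b hab₂)
        exact (ihF a b hab).coh (jv₂ a b) (F₂ a b) (by rw [e1]; exact hF₂ a b hab₂)
      intro f g
      constructor
      · intro hB a b hab₂
        have hab := (E0 a b).mpr hab₂
        obtain ⟨fa, gb, h1, h2, h3⟩ := hB a b hab
        exact ⟨fa, gb, h1, h2, (key a b hab fa gb).mp h3⟩
      · intro hB a b hab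
        obtain ⟨fa, gb, h1, h2, h3⟩ := hB a b ((E0 a b).mp hab)
        exact ⟨fa, gb, h1, h2, (key a b hab fa gb).mpr h3⟩
  | sigma σ₁ τ₁ i j B₀ iv jv F h₀ hi hj hF ih₀ ihF =>
    have coh := coh_aux ih₀.bsym ih₀.btrans hi hj hF ihF
    refine ⟨?_, ?_, ?_, ?_, ?_⟩
    · rintro x y ⟨a₀, b₀, h0a, h0b, hB, a₁, b₁, h1a, h1b, hF1⟩
      exact ⟨b₀, a₀, h0b, h0a, ih₀.bsym a₀ b₀ hB, b₁, a₁, h1b, h1a,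
        ((coh a₀ b₀ hB).2.1 b₁ a₁).mpr (((coh a₀ b₀ hB).1 a₁ b₁).mp hF1)⟩
    · rintro x y z ⟨a₀, b₀, h0a, h0b, hB, a₁, b₁, h1a, h1b, hF1⟩
        ⟨b₀', c₀, h0b', h0c, hB2, b₁', c₁, h1b', h1c, hF2⟩
      have e0 : b₀' = b₀ := Part.mem_unique h0b' h0b
      have e1 : b₁' = b₁ := Part.mem_unique h1b' h1b
      rw [e0] at hB2
      rw [e0, e1] at hF2
      have hBac := ih₀.btrans a₀ b₀ c₀ hB hB2
      have s1 : F b₀ b₀ b₁ c₁ := ((coh b₀ c₀ hB2).1 b₁ c₁).mp hF2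
      have s2 : F a₀ b₀ c₁ b₁ := ((coh a₀ b₀ hB).2.2 c₁ b₁).mpr s1
      have s3 : F a₀ b₀ b₁ c₁ := (ihF a₀ b₀ hB).bsym c₁ b₁ s2
      have s4 : F a₀ b₀ a₁ c₁ := (ihF a₀ b₀ hB).btrans a₁ b₁ c₁ hF1 s3
      exact ⟨a₀, c₀, h0a, h0c, hBac, a₁, c₁, h1a, h1c,
        ((coh a₀ c₀ hBac).1 a₁ c₁).mpr (((coh a₀ b₀ hB).1 a₁ c₁).mp s4)⟩
    · refine TS_iff (TS.sigma τ₁ σ₁ j i (fun a b => B₀ b a) (fun a b => jv b a) (fun a b => iv b a)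
        (fun a b x y => F b a y x) ih₀.symm (fun a b hba => hj b a hba)
        (fun a b hba => hi b a hba) (fun a b hba => (ihF b a hba).symm)) ?_
      intro x y
      constructor
      · rintro ⟨a₀, b₀, h0a, h0b, hB, a₁, b₁, h1a, h1b, hF1⟩
        exact ⟨b₀, a₀, h0b, h0a, hB, b₁, a₁, h1b, h1a, hF1⟩
      · rintro ⟨a₀, b₀, h0a, h0b, hB, a₁, b₁, h1a, h1b, hF1⟩
        exact ⟨b₀, a₀, h0b, h0a, hB, b₁, a₁, h1b, h1a, hF1⟩
    · intro ρ B' h'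
      obtain ⟨ρ', j', B₂, iv₂, jv₂, F₂, rfl, h₂, hi₂, hj₂, hF₂, rfl⟩ := TS_sigma_inv h'
      obtain ⟨hσρ, E0⟩ := ih₀.trans ρ' B₂ h₂
      have key : ∀ a b, B₀ a b →
          jv₂ a b ∈ P.toPCA.ap j' b ∧ TS P (iv a b) (jv₂ a b) (F a b) ∧
          (∀ x y, F a b x y ↔ F₂ a b x y) := by
        intro a b hab
        have hab₂ : B₂ a b := (E0 a b).mp hab
        have haa := ih₀.btrans a b a hab (ih₀.bsym a b hab)
        have e1 : iv a a = iv a b := Part.mem_unique (hi a a haa) (hi a b hab)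
        have e2 : jv a a = iv₂ a b := Part.mem_unique (hj a a haa) (hi₂ a b hab₂)
        obtain ⟨T1, E1⟩ := (ihF a a haa).trans (jv₂ a b) (F₂ a b)
          (by rw [e2]; exact hF₂ a b hab₂)
        have E2 := (coh a b hab).1
        refine ⟨hj₂ a b hab₂, ?_, fun x y => (E2 x y).trans (E1 x y)⟩
        rw [← e1]
        exact TS_iff T1 (fun x y => (E2 x y).symm)
      refine ⟨TS.sigma σ₁ ρ' i j' B₀ iv (fun a b => jv₂ a b) F hσρ hi
        (fun a b hab => (key a b hab).1) (fun a b hab => (key a b hab).2.1), ?_⟩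
      intro x y
      constructor
      · rintro ⟨a₀, b₀, h0a, h0b, hB, a₁, b₁, h1a, h1b, hF1⟩
        exact ⟨a₀, b₀, h0a, h0b, (E0 a₀ b₀).mp hB, a₁, b₁, h1a, h1b,
          ((key a₀ b₀ hB).2.2 a₁ b₁).mp hF1⟩
      · rintro ⟨a₀, b₀, h0a, h0b, hB2, a₁, b₁, h1a, h1b, hF1⟩
        have hB := (E0 a₀ b₀).mpr hB2
        exact ⟨a₀, b₀, h0a, h0b, hB, a₁, b₁, h1a, h1b,
          ((key a₀ b₀ hB).2.2 a₁ b₁).mpr hF1⟩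
    · intro ρ B' h'
      obtain ⟨ρ', j₂, B₂, iv₂, jv₂, F₂, rfl, h₂, hi₂, hj₂, hF₂, rfl⟩ := TS_sigma_inv h'
      have E0 := ih₀.coh ρ' B₂ h₂
      have key : ∀ a b, B₀ a b → ∀ x y, F a b x y ↔ F₂ a b x y := by
        intro a b hab
        have hab₂ := (E0 a b).mp hab
        have e1 : iv a b = iv₂ a b := Part.mem_unique (hi a b hab) (hi₂ a b hab₂)
        exact (ihF a b hab).coh (jv₂ a b) (F₂ a b) (by rw [e1]; exact hF₂ a b hab₂)
      intro x y
      constructor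
      · rintro ⟨a₀, b₀, h0a, h0b, hB, a₁, b₁, h1a, h1b, hF1⟩
        exact ⟨a₀, b₀, h0a, h0b, (E0 a₀ b₀).mp hB, a₁, b₁, h1a, h1b,
          (key a₀ b₀ hB a₁ b₁).mp hF1⟩
      · rintro ⟨a₀, b₀, h0a, h0b, hB2, a₁, b₁, h1a, h1b, hF1⟩
        have hB := (E0 a₀ b₀).mpr hB2
        exact ⟨a₀, b₀, h0a, h0b, hB, a₁, b₁, h1a, h1b, (key a₀ b₀ hB a₁ b₁).mpr hF1⟩
  | ident σ₁ τ₁ a a' b b' B₀ h₀ ha hb ih₀ =>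
    have hEab : ∀ {x x' y y' : A}, B₀ x x' → B₀ y y' → B₀ x y → B₀ x' y' := by
      intro x x' y y' hx hy hxy
      exact ih₀.btrans x' x y' (ih₀.bsym x x' hx) (ih₀.btrans x y y' hxy hy)
    refine ⟨?_, ?_, ?_, ?_, ?_⟩
    · rintro c d ⟨rfl, rfl, hB⟩; exact ⟨rfl, rfl, hB⟩
    · rintro c d e ⟨rfl, rfl, hB⟩ ⟨-, rfl, -⟩; exact ⟨rfl, rfl, hB⟩
    · refine TS_iff (TS.ident τ₁ σ₁ a' a b' b (fun x y => B₀ y x) ih₀.symm ha hb) ?_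
      intro c d
      constructor
      · rintro ⟨rfl, rfl, hB⟩
        exact ⟨rfl, rfl, ih₀.bsym b a (hEab (ih₀.bsym b b' hb) (ih₀.bsym a a' ha) hB)⟩
      · rintro ⟨rfl, rfl, hB⟩
        exact ⟨rfl, rfl, ih₀.bsym a' b' (hEab ha hb hB)⟩
    · intro ρ B' h'
      obtain ⟨τ₂, c', d', B₂, rfl, h₂, hc, hd, rfl⟩ := TS_id_inv h'
      obtain ⟨hσρ, E0⟩ := ih₀.trans τ₂ B₂ h₂
      have hac' : B₀ a c' := ih₀.btrans a a' c' ha ((E0 a' c').mpr hc)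
      have hbd' : B₀ b d' := ih₀.btrans b b' d' hb ((E0 b' d').mpr hd)
      refine ⟨TS.ident σ₁ τ₂ a c' b d' B₀ hσρ hac' hbd', ?_⟩
      intro c d
      constructor
      · rintro ⟨rfl, rfl, hB⟩
        exact ⟨rfl, rfl, (E0 a' b').mp (hEab ha hb hB)⟩
      · rintro ⟨rfl, rfl, hB⟩
        have hab' : B₀ a' b' := (E0 a' b').mpr hB
        exact ⟨rfl, rfl, ih₀.btrans a a' b ha (ih₀.btrans a' b' b hab' (ih₀.bsym b b' hb))⟩
    · intro ρ B' h'
      obtain ⟨τ₂, c', d', B₂, rfl, h₂, hc, hd, rfl⟩ := TS_id_inv h'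
      have E0 := ih₀.coh τ₂ B₂ h₂
      intro c d
      constructor
      · rintro ⟨rfl, rfl, hB⟩; exact ⟨rfl, rfl, (E0 a b).mp hB⟩
      · rintro ⟨rfl, rfl, hB⟩; exact ⟨rfl, rfl, (E0 a b).mpr hB⟩

end PERProof

/-- In the ΠΣI type structure on a pca over ω, suppose `σ ∼ τ` and `τ ∼ ρ`. Then:
(i) `σ ∼ σ`, `τ ∼ σ`, and `σ ∼ ρ`;
(ii) `a ∼_σ b` iff `a ∼_τ b`;
(iii) if `a ∼_σ b` and `b ∼_σ c`, then `a ∼_σ a`, `b ∼_σ a`, and `a ∼_σ c`.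
In other words, `∼` and each `∼_σ` are partial equivalence relations on `A`. -/
theorem TS_per {A : Type u} (P : TPCA A) (σ τ ρ : A)
    (hστ : TEquiv P σ τ) (hτρ : TEquiv P τ ρ) :
    (TEquiv P σ σ ∧ TEquiv P τ σ ∧ TEquiv P σ ρ) ∧
    (∀ a b : A, MemT P σ a b ↔ MemT P τ a b) ∧
    (∀ a b c : A, MemT P σ a b → MemT P σ b c →
      MemT P σ a a ∧ MemT P σ b a ∧ MemT P σ a c) := by
  obtain ⟨B, hB⟩ := hστ
  obtain ⟨B', hB'⟩ := hτρ
  have M := TS_main hB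
  refine ⟨⟨?_, ?_, ?_⟩, ?_, ?_⟩
  · exact ⟨B, (M.trans σ (fun a b => B b a) M.symm).1⟩
  · exact ⟨fun a b => B b a, M.symm⟩
  · exact ⟨B, (M.trans ρ B' hB').1⟩
  · intro a b
    constructor
    · rintro ⟨α, B₁, h₁, hab⟩
      have E := (TS_main h₁).coh τ B hB
      exact ⟨σ, fun x y => B y x, M.symm, M.bsym a b ((E a b).mp hab)⟩
    · rintro ⟨β, B₂, h₂, hab⟩
      obtain ⟨hτ, E⟩ := M.trans β B₂ h₂
      exact ⟨β, B, hτ, (E a b).mpr hab⟩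
  · rintro a b c ⟨α, B₁, h₁, hab⟩ ⟨β, B₂, h₂, hbc⟩
    have M₁ := TS_main h₁
    have E := M₁.coh β B₂ h₂
    have hbc' : B₁ b c := (E b c).mpr hbc
    exact ⟨⟨α, B₁, h₁, M₁.btrans a b a hab (M₁.bsym a b hab)⟩,
           ⟨α, B₁, h₁, M₁.bsym a b hab⟩,
           ⟨α, B₁, h₁, M₁.btrans a b c hab hbc'⟩⟩
end
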